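/- If X is a uniformly perfect metric space, E ⊆ X is an (α_n)-regular set, and f : X → Y is an η-quasisymmetric homeomorphism onto a metric space Y, then the image f(E) is an (α_n)-regular subset of Y (with possibly different constants d, C₁, C₂, C₃(·)). -/

import Mathlib

open MeasureTheory Metric Set Filter

/-- A measure is doubling with constant `C`:
`0 < μ(B(x,2r)) ≤ C·μ(B(x,r)) < ∞` for all `x` and `r > 0`. -/
def IsDoublingWith {X : Type*} [MetricSpace X] [MeasurableSpace X]
    (μ : Measure X) (C : NNReal) : Prop :=
  ∀ (x : X) (r : ℝ), 0 < r →
    0 < μ (ball x (2 * r)) ∧ μ (ball x (2 * r)) ≤ (C : ENNReal) * μ (ball x r) ∧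
      (C : ENNReal) * μ (ball x r) < ⊤

/-- A doubling measure: doubling with some constant `C ≥ 1`. -/
def IsDoublingMeasure {X : Type*} [MetricSpace X] [MeasurableSpace X]
    (μ : Measure X) : Prop :=
  ∃ C : NNReal, 1 ≤ C ∧ IsDoublingWith μ C

/-- A uniformly perfect metric space. -/
def UniformlyPerfect (X : Type*) [MetricSpace X] : Prop :=
  (∃ x y : X, x ≠ y) ∧
    ∃ D : ℝ, 1 ≤ D ∧ ∀ (x : X) (r : ℝ), 0 < r →
      ((Set.univ : Set X) \ ball x r).Nonempty → (ball x r \ ball x (r / D)).Nonempty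

/-- A (metrically) doubling space: there is `N` such that every ball of radius `r`
is covered by `N` balls of radius `r/2`. -/
def DoublingSpace (X : Type*) [MetricSpace X] : Prop :=
  ∃ N : ℕ, ∀ (x : X) (r : ℝ), 0 < r →
    ∃ s : Finset X, s.card ≤ N ∧ ball x r ⊆ ⋃ y ∈ s, ball y (r / 2)

/-- Ahlfors `q`-regularity of the measure `H` with constant `C`. -/
def AhlforsRegular {X : Type*} [MetricSpace X] [MeasurableSpace X]
    (H : Measure X) (q C : ℝ) : Prop :=
  ∀ (x : X) (r : ℝ), 0 < r →
    ENNReal.ofReal (r ^ q / C) ≤ H (ball x r) ∧ H (ball x r) ≤ ENNReal.ofReal (C * r ^ q)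

/-- An `(α n)`-regular structure on `X`: Borel "cubes" `Q n i` (for `i ∈ idx n`) with
centers `ctr n i`, radii `rad n i` and constants `d, C₁, C₂, C₃(·)` satisfying
conditions (I)-(V) of Ojala's definition of `(α n)`-regular sets. -/
structure RegularStructure (X : Type*) [MetricSpace X] [MeasurableSpace X]
    (α : ℕ → ℝ) where
  idx : ℕ → Set ℕ
  Q : ℕ → ℕ → Set X
  ctr : ℕ → ℕ → X
  rad : ℕ → ℕ → ℝ
  d : ℝ
  C₁ : ℝ
  C₂ : ℝ
  C₃ : ℝ → ℝ
  d_pos : 0 < d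
  d_le_one : d ≤ 1
  one_le_C₁ : 1 ≤ C₁
  one_le_C₂ : 1 ≤ C₂
  borel : ∀ n, ∀ i ∈ idx n, MeasurableSet (Q n i)
  rad_pos : ∀ n, ∀ i ∈ idx n, 0 < rad n i
  -- (I): each level partitions the space
  cover : ∀ (n : ℕ) (x : X), ∃ i ∈ idx n, x ∈ Q n i
  pairwise_disj : ∀ n, ∀ i ∈ idx n, ∀ j ∈ idx n, i ≠ j → Q n i ∩ Q n j = ∅
  -- (II): nestedness
  nested : ∀ k m, m ≤ k → ∀ i ∈ idx k, ∀ j ∈ idx m, Q k i ∩ Q m j = ∅ ∨ Q k i ⊆ Q m j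
  -- (III): cubes squeezed between balls
  ball_subset : ∀ n, ∀ i ∈ idx n, ball (ctr n i) (rad n i) ⊆ Q n i
  subset_ball : ∀ n, ∀ i ∈ idx n, Q n i ⊆ ball (ctr n i) (C₁ * rad n i)
  -- (IV): size of the child cube containing the center
  center_lower : ∀ n, ∀ i ∈ idx n, ∀ j ∈ idx (n + 1), ctr n i ∈ Q (n + 1) j →
    (1 / C₂) * α n ^ (1 / d) * rad n i ≤ rad (n + 1) j
  center_upper : ∀ n, ∀ i ∈ idx n, ∀ j ∈ idx (n + 1), ctr n i ∈ Q (n + 1) j →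
    rad (n + 1) j ≤ C₂ * α n ^ d * rad n i
  center_proper : ∀ n, ∀ i ∈ idx n, ∀ j ∈ idx (n + 1), ctr n i ∈ Q (n + 1) j →
    (Q n i \ Q (n + 1) j).Nonempty
  -- (V): comparability of radii of nearby cubes of the same level
  one_le_C₃ : ∀ T : ℝ, 1 < T → 1 ≤ C₃ T
  comparable : ∀ T : ℝ, 1 < T → ∀ n, ∀ i ∈ idx n, ∀ j ∈ idx n,
    (Q n i ∩ ball (ctr n j) (T * rad n j)).Nonempty →
    (1 / C₃ T) * rad n j ≤ rad n i ∧ rad n i ≤ C₃ T * rad n j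

namespace RegularStructure

variable {X : Type*} [MetricSpace X] [MeasurableSpace X] {α : ℕ → ℝ}

open scoped Classical

/-- `E_n`: the union over `i ∈ N_n` of `Q_{n,i} ∖ Q_{n+1,j(i)}` where `j(i)` is the
index of the `(n+1)`-cube containing the center `x_{n,i}`. -/
def level (S : RegularStructure X α) (n : ℕ) : Set X :=
  {x | ∃ i ∈ S.idx n, ∃ j ∈ S.idx (n + 1),
    S.ctr n i ∈ S.Q (n + 1) j ∧ x ∈ S.Q n i \ S.Q (n + 1) j}

/-- The `(α n)`-regular set `E = ⋂ n, E_n` determined by the structure. -/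
def limitSet (S : RegularStructure X α) : Set X := ⋂ n, S.level n

/-- `⋂_{i=1}^{n-1} E_i`. -/
def preLevel (S : RegularStructure X α) (n : ℕ) : Set X :=
  ⋂ i ∈ Finset.Icc 1 (n - 1), S.level i

/-- `𝔍_{n,j}`: the union of the `(n+1)`-cubes contained in `B(x_{n,j}, r_{n,j}/2)`. -/
def Jset (S : RegularStructure X α) (n j : ℕ) : Set X :=
  {x | ∃ i ∈ S.idx (n + 1),
    S.Q (n + 1) i ⊆ ball (S.ctr n j) (S.rad n j / 2) ∧ x ∈ S.Q (n + 1) i}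

/-- `IN(B(x,r),n)`: the union of the `n`-cubes contained in `B(x,r)`. -/
def INset (S : RegularStructure X α) (x : X) (r : ℝ) (n : ℕ) : Set X :=
  {y | ∃ j ∈ S.idx n, S.Q n j ⊆ ball x r ∧ y ∈ S.Q n j}

/-- `COV(B(x,r),n)`: the union of the `n`-cubes meeting `B(x,r)`. -/
def COVset (S : RegularStructure X α) (x : X) (r : ℝ) (n : ℕ) : Set X :=
  {y | ∃ j ∈ S.idx n, (S.Q n j ∩ ball x r).Nonempty ∧ y ∈ S.Q n j}

/-- The normalizing constant `A_{n,j} = H(𝔍_{n,j}) / ∫_{𝔍_{n,j}} d(x_{n,j},y)^ρ dH(y)`. -/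
noncomputable def Acoef (S : RegularStructure X α) (H : Measure X) (ρ : ℝ) (n j : ℕ) : ℝ :=
  (H (S.Jset n j)).toReal / ∫ y in S.Jset n j, dist (S.ctr n j) y ^ ρ ∂H

/-- The weight `y_n`: equal to `A_{n,j} d(x_{n,j},x)^ρ` on `𝔍_{n,j}` and `1` elsewhere. -/
noncomputable def weight (S : RegularStructure X α) (H : Measure X) (ρ : ℝ) (n : ℕ)
    (x : X) : ℝ :=
  if h : ∃ j ∈ S.idx n, x ∈ S.Jset n j then
    S.Acoef H ρ n h.choose * dist (S.ctr n h.choose) x ^ ρ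
  else 1

/-- The measure `θ_n` with `dθ_n = y_n dH`. -/
noncomputable def theta (S : RegularStructure X α) (H : Measure X) (ρ : ℝ) (n : ℕ) :
    Measure X :=
  H.withDensity fun x => ENNReal.ofReal (S.weight H ρ n x)

/-- The averaged weight `t_n`: on each `(n+1)`-cube `Q`, equal to `θ_n(Q)/H(Q)`. -/
noncomputable def avgWeight (S : RegularStructure X α) (H : Measure X) (ρ : ℝ) (n : ℕ)
    (x : X) : ℝ :=
  if h : ∃ i ∈ S.idx (n + 1), x ∈ S.Q (n + 1) i then
    (S.theta H ρ n (S.Q (n + 1) h.choose)).toReal / (H (S.Q (n + 1) h.choose)).toReal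
  else 1

/-- `K_n = ∏_{i=n₀}^{n} t_i`. -/
noncomputable def Kweight (S : RegularStructure X α) (H : Measure X) (ρ : ℝ)
    (n₀ n : ℕ) (x : X) : ℝ :=
  ∏ i ∈ Finset.Icc n₀ n, S.avgWeight H ρ i x

/-- The measure `ν_n` with `dν_n = K_n dH`. -/
noncomputable def nu (S : RegularStructure X α) (H : Measure X) (ρ : ℝ) (n₀ n : ℕ) :
    Measure X :=
  H.withDensity fun x => ENNReal.ofReal (S.Kweight H ρ n₀ n x)

/-- A level `n` is good if `B(x_{n,j}, r_{n,j}/16) ⊆ 𝔍_{n,j}` for all `j`, and balls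
`B(x,2r)` with `x ∈ Q_{n,j}`, `r ≤ r_{n,j}/(32 C₃(2C₁))` miss all `𝔍_{n,i}`, `i ≠ j`. -/
def GoodLevel (S : RegularStructure X α) (n : ℕ) : Prop :=
  (∀ j ∈ S.idx n, ball (S.ctr n j) (S.rad n j / 16) ⊆ S.Jset n j) ∧
  (∀ j ∈ S.idx n, ∀ x ∈ S.Q n j, ∀ r : ℝ, 0 < r →
    r ≤ S.rad n j / (32 * S.C₃ (2 * S.C₁)) →
    ∀ i ∈ S.idx n, i ≠ j → ball x (2 * r) ∩ S.Jset n i = ∅)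

/-- Relative plumpness of the `(α n)`-regular set determined by the structure. -/
def RelativelyPlump (S : RegularStructure X α) : Prop :=
  ∃ b : ℝ, 0 < b ∧ ∀ x ∈ S.limitSet, ∀ R : ℝ, 0 < R → ∀ n : ℕ,
    (∃ j ∈ S.idx n, S.Q n j ⊆ ball x R ∩ S.preLevel n) →
    (∀ m, m < n → ¬ ∃ j ∈ S.idx m, S.Q m j ⊆ ball x R ∩ S.preLevel m) →
    ∃ y ∈ S.preLevel n, ball y (b * R) ⊆ ball x R ∩ S.preLevel n

end RegularStructure

/-- `E ⊆ X` is an `(α n)`-regular set. -/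
def IsRegularSet {X : Type*} [MetricSpace X] [MeasurableSpace X]
    (α : ℕ → ℝ) (E : Set X) : Prop :=
  ∃ S : RegularStructure X α, E = S.limitSet

/-!
The image structure has cubes `f(Q n i)`, centres `f(x n i)` and radii
`d(f x n i, f p) / (η 1 + 1)`, where `p` is a point at distance comparable to `r n i` from
`x n i`: uniform perfectness provides it once some point lies at distance `≳ r n i`, which at
level `0` (where a cube may be all of `X`) is found through the child cube of (IV).
Conditions (I), (II) and the last clause of (IV) survive any bijection, and (III) and (V) follow
directly from quasisymmetry. For the size bounds of (IV), uniform perfectness lets one iterate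
the quasisymmetry inequality along points at geometrically shrinking distances, so that `f`
distorts a ratio of distances `t ≤ 1` at most like a power: it becomes at most `C t^β` and at
least `t^γ / C`. Hence the factors `α n ^ (1/d)` and `α n ^ d` turn into powers of `α n` again,
with the new exponent `min 1 (min (d β) (d / γ))`.
-/

def UniformlyPerfectWith (X : Type*) [MetricSpace X] (D : ℝ) : Prop :=
  ∀ (x : X) (r : ℝ), 0 < r →
    ((Set.univ : Set X) \ ball x r).Nonempty → (ball x r \ ball x (r / D)).Nonempty

theorem UniformlyPerfectWith.exists_dist_mem_Ico {X : Type*} [MetricSpace X] {D : ℝ}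
    (hX : UniformlyPerfectWith X D) {x p : X} {ρ : ℝ} (hρ : 0 < ρ) (hp : ρ ≤ dist x p) :
    ∃ z, ρ / D ≤ dist x z ∧ dist x z < ρ := by
  obtain ⟨z, hz, hz'⟩ := hX x ρ hρ ⟨p, mem_univ p, fun h => (mem_ball'.1 h).not_ge hp⟩
  exact ⟨z, not_lt.1 fun h => hz' (mem_ball'.2 h), mem_ball'.1 hz⟩

section Quasisymmetric

variable {X Y : Type*} [MetricSpace X] [MetricSpace Y]

structure IsQuasisymmetric (f : X → Y) (η : ℝ → ℝ) : Prop where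
  injective : Function.Injective f
  strictMonoOn : StrictMonoOn η (Ici 0)
  mapsTo : MapsTo η (Ici 0) (Ici 0)
  surjOn : SurjOn η (Ici 0) (Ici 0)
  div_le : ∀ x y z, x ≠ y → x ≠ z → y ≠ z →
    dist (f x) (f y) / dist (f x) (f z) ≤ η (dist x y / dist x z)

namespace IsQuasisymmetric

variable {f : X → Y} {η : ℝ → ℝ} {D : ℝ}

theorem eta_nonneg (hf : IsQuasisymmetric f η) {s : ℝ} (hs : 0 ≤ s) : 0 ≤ η s :=
  hf.mapsTo hs

theorem eta_mono (hf : IsQuasisymmetric f η) {s t : ℝ} (hs : 0 ≤ s) (hst : s ≤ t) : η s ≤ η t :=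
  hf.strictMonoOn.monotoneOn hs (hs.trans hst) hst

theorem eta_zero (hf : IsQuasisymmetric f η) : η 0 = 0 := by
  obtain ⟨t, ht, h0⟩ := hf.surjOn (self_mem_Ici : (0 : ℝ) ∈ Ici 0)
  exact le_antisymm ((hf.eta_mono le_rfl ht).trans h0.le) (hf.eta_nonneg le_rfl)

theorem eta_pos (hf : IsQuasisymmetric f η) {s : ℝ} (hs : 0 < s) : 0 < η s :=
  hf.eta_zero ▸ hf.strictMonoOn self_mem_Ici hs.le hs

theorem exists_pos_eta_le (hf : IsQuasisymmetric f η) {ε : ℝ} (hε : 0 < ε) :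
    ∃ s, 0 < s ∧ η s ≤ ε := by
  obtain ⟨s, hs, hηs⟩ := hf.surjOn hε.le
  refine ⟨s, lt_of_le_of_ne hs ?_, hηs.le⟩
  rintro rfl
  exact hε.ne' (hηs ▸ hf.eta_zero)

theorem dist_le_eta_mul (hf : IsQuasisymmetric f η) {x y z : X} (hxy : x ≠ y) (hxz : x ≠ z)
    (hyz : y ≠ z) {s : ℝ} (h : dist x y ≤ s * dist x z) :
    dist (f x) (f y) ≤ η s * dist (f x) (f z) := by
  have hfxz : 0 < dist (f x) (f z) := dist_pos.2 (hf.injective.ne hxz)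
  have hratio : dist x y / dist x z ≤ s := (div_le_iff₀ (dist_pos.2 hxz)).2 h
  rw [← div_le_iff₀ hfxz]
  exact (hf.div_le x y z hxy hxz hyz).trans
    (hf.eta_mono (div_nonneg dist_nonneg dist_nonneg) hratio)

theorem dist_le_of_dist_le (hf : IsQuasisymmetric f η) {x y z : X} (hxz : x ≠ z) {s : ℝ}
    (h : dist x y ≤ s * dist x z) :
    dist (f x) (f y) ≤ (η s + 1) * dist (f x) (f z) := by
  have hηs := hf.eta_nonneg (nonneg_of_mul_nonneg_left (dist_nonneg.trans h) (dist_pos.2 hxz))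
  rcases eq_or_ne x y with rfl | hxy
  · simp only [dist_self]; positivity
  rcases eq_or_ne y z with rfl | hyz
  · nlinarith [dist_nonneg (x := f x) (y := f y)]
  nlinarith [hf.dist_le_eta_mul hxy hxz hyz h, dist_nonneg (x := f x) (y := f z)]

theorem dist_le_mul_eta_pow (hf : IsQuasisymmetric f η) (hX : UniformlyPerfectWith X D)
    (hD : 0 < D) {σ : ℝ} (hσ0 : 0 < σ) (hσ1 : σ ≤ 1) {K : ℝ} (k : ℕ) {x a b : X}
    (hxb : x ≠ b) (h : dist x a ≤ K * (σ / D) ^ k * dist x b) :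
    dist (f x) (f a) ≤ (η K + 1) * η σ ^ k * dist (f x) (f b) := by
  induction k generalizing b with
  | zero => simpa using hf.dist_le_of_dist_le hxb (by simpa using h)
  | succ k ih =>
    have hb : 0 < dist x b := dist_pos.2 hxb
    have hK : 0 ≤ K :=
      nonneg_of_mul_nonneg_left (nonneg_of_mul_nonneg_left (dist_nonneg.trans h) hb)
        (by positivity)
    obtain ⟨z, hz, hzb⟩ :=
      hX.exists_dist_mem_Ico (mul_pos hσ0 hb) (mul_le_of_le_one_left hb.le hσ1)
    have hxz : x ≠ z := dist_pos.1 ((by positivity : 0 < σ * dist x b / D).trans_le hz)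
    have hzb' : z ≠ b := by
      rintro rfl
      exact (mul_le_of_le_one_left hb.le hσ1).not_gt hzb
    have hfz : dist (f x) (f z) ≤ η σ * dist (f x) (f b) := hf.dist_le_eta_mul hxz hxb hzb' hzb.le
    have hza : dist x a ≤ K * (σ / D) ^ k * dist x z :=
      calc dist x a ≤ K * (σ / D) ^ k * (σ * dist x b / D) := by
            rw [pow_succ] at h; linarith [show K * ((σ / D) ^ k * (σ / D)) * dist x b =
              K * (σ / D) ^ k * (σ * dist x b / D) by ring]
        _ ≤ K * (σ / D) ^ k * dist x z := by gcongr
    have hC : 0 ≤ (η K + 1) * η σ ^ k := by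
      have := hf.eta_nonneg hK; have := hf.eta_nonneg hσ0.le; positivity
    calc dist (f x) (f a) ≤ (η K + 1) * η σ ^ k * dist (f x) (f z) := ih hxz hza
      _ ≤ (η K + 1) * η σ ^ k * (η σ * dist (f x) (f b)) := mul_le_mul_of_nonneg_left hfz hC
      _ = (η K + 1) * η σ ^ (k + 1) * dist (f x) (f b) := by ring

theorem dist_le_mul_pow_of_dist_le_two_pow_mul (hf : IsQuasisymmetric f η)
    (hX : UniformlyPerfectWith X D) (hD : 0 < D) (k : ℕ) {x a b : X} (hxa : x ≠ a) (h : dist x b ≤ 2 ^ k * dist x a) :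
    dist (f x) (f b) ≤ (η 1 + 1) * (η (2 * D) + 1) ^ k * dist (f x) (f a) := by
  induction k generalizing b with
  | zero => simpa using hf.dist_le_of_dist_le hxa (by simpa using h)
  | succ k ih =>
    have hΘ : 1 ≤ η (2 * D) + 1 := by linarith [hf.eta_nonneg (by positivity : 0 ≤ 2 * D)]
    have hη1 := hf.eta_nonneg zero_le_one
    by_cases hb : dist x b ≤ 2 ^ k * dist x a
    · calc dist (f x) (f b) ≤ (η 1 + 1) * (η (2 * D) + 1) ^ k * dist (f x) (f a) := ih hb
        _ ≤ (η 1 + 1) * (η (2 * D) + 1) ^ (k + 1) * dist (f x) (f a) :=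
          mul_le_mul_of_nonneg_right (mul_le_mul_of_nonneg_left
            (pow_le_pow_right₀ hΘ k.le_succ) (by linarith)) dist_nonneg
    push Not at hb
    have ha : 0 < dist x a := dist_pos.2 hxa
    obtain ⟨z, hz, hzb⟩ := hX.exists_dist_mem_Ico (by positivity) hb.le
    have hxz : x ≠ z := dist_pos.1 ((by positivity : 0 < 2 ^ k * dist x a / D).trans_le hz)
    have hbz : dist x b ≤ 2 * D * dist x z :=
      calc dist x b ≤ 2 * D * (2 ^ k * dist x a / D) := by
            convert h using 1
            field_simp
            ring
        _ ≤ 2 * D * dist x z := by gcongr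
    calc dist (f x) (f b) ≤ (η (2 * D) + 1) * dist (f x) (f z) := hf.dist_le_of_dist_le hxz hbz
      _ ≤ (η (2 * D) + 1) * ((η 1 + 1) * (η (2 * D) + 1) ^ k * dist (f x) (f a)) :=
          mul_le_mul_of_nonneg_left (ih hzb.le) (by linarith)
      _ = (η 1 + 1) * (η (2 * D) + 1) ^ (k + 1) * dist (f x) (f a) := by ring

theorem exists_rpow_decay (hf : IsQuasisymmetric f η) (hX : UniformlyPerfectWith X D)
    (hD : 1 ≤ D) :
    ∃ β : ℝ, 0 < β ∧ ∀ K, 0 ≤ K → ∃ C, ∀ (x a b : X) (t : ℝ), x ≠ b → 0 < t → t ≤ 1 →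
      dist x a ≤ K * t * dist x b → dist (f x) (f a) ≤ C * t ^ β * dist (f x) (f b) := by
  obtain ⟨s, hs0, hs⟩ := hf.exists_pos_eta_le one_half_pos
  set σ := min s (1 / 2)
  have hσ0 : 0 < σ := lt_min hs0 one_half_pos
  have hησ0 : 0 < η σ := hf.eta_pos hσ0
  have hησ1 : η σ < 1 := by
    linarith [hf.eta_mono hσ0.le (min_le_left s (1 / 2))]
  set τ := σ / D
  have hτ0 : 0 < τ := by positivity
  have hτ1 : τ < 1 := (div_lt_one (by positivity)).2 (by linarith [min_le_right s (1 / 2)])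
  have hβ := Real.logb_pos_of_base_lt_one hτ0 hτ1 hησ0 hησ1
  refine ⟨Real.logb τ (η σ), hβ, fun K hK => ?_⟩
  refine ⟨(η K + 1) / η σ, fun x a b t hxb ht0 ht1 h => ?_⟩
  obtain ⟨k, htk, hkt⟩ := exists_nat_pow_near_of_lt_one ht0 ht1 hτ0 hτ1
  have hpow : η σ ^ (k + 1) ≤ t ^ Real.logb τ (η σ) :=
    calc η σ ^ (k + 1) = (τ ^ (k + 1)) ^ Real.logb τ (η σ) := by
          rw [← Real.rpow_pow_comm hτ0.le, Real.rpow_logb hτ0 hτ1.ne hησ0]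
      _ ≤ t ^ Real.logb τ (η σ) := Real.rpow_le_rpow (by positivity) htk.le hβ.le
  have hηK := hf.eta_nonneg hK
  calc dist (f x) (f a) ≤ (η K + 1) * η σ ^ k * dist (f x) (f b) :=
        hf.dist_le_mul_eta_pow hX (by positivity) hσ0
          ((min_le_right s (1 / 2)).trans (by norm_num))
          k hxb (h.trans (by gcongr))
    _ = (η K + 1) / η σ * η σ ^ (k + 1) * dist (f x) (f b) := by
        field_simp
        ring
    _ ≤ (η K + 1) / η σ * t ^ Real.logb τ (η σ) * dist (f x) (f b) := by gcongr

theorem exists_rpow_growth (hf : IsQuasisymmetric f η) (hX : UniformlyPerfectWith X D)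
    (hD : 0 < D) :
    ∃ γ : ℝ, 0 < γ ∧ ∀ K, ∃ C, 0 ≤ C ∧ ∀ (x a b : X) (t : ℝ), x ≠ a → 0 < t → t ≤ 1 →
      t * dist x b ≤ K * dist x a → t ^ γ * dist (f x) (f b) ≤ C * dist (f x) (f a) := by
  set Θ := η (2 * D) + 1
  have hΘ : 1 < Θ := by linarith [hf.eta_pos (by positivity : 0 < 2 * D)]
  set γ := Real.logb 2 Θ
  have hγ : 0 < γ := Real.logb_pos one_lt_two hΘ
  have hη1 := hf.eta_nonneg zero_le_one
  refine ⟨γ, hγ, fun K => ⟨(η 1 + 1) * (2 * max K 1) ^ γ, by positivity,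
    fun x a b t hxa ht ht1 h => ?_⟩⟩
  obtain ⟨k, hku, huk⟩ := exists_nat_pow_near (le_max_right (K / t) 1) one_lt_two
  have hb : dist x b ≤ 2 ^ (k + 1) * dist x a :=
    calc dist x b ≤ K / t * dist x a := by
          rw [div_mul_eq_mul_div, le_div_iff₀ ht]
          linarith
      _ ≤ 2 ^ (k + 1) * dist x a := by gcongr; exact (le_max_left _ _).trans huk.le
  have htΘ : t ^ γ * Θ ^ (k + 1) ≤ (2 * max K 1) ^ γ :=
    calc t ^ γ * Θ ^ (k + 1) = (t * 2 ^ (k + 1)) ^ γ := by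
          rw [Real.mul_rpow ht.le (by positivity), ← Real.rpow_pow_comm zero_le_two,
            Real.rpow_logb two_pos (by norm_num) (by positivity)]
      _ ≤ (2 * max K 1) ^ γ := by
          refine Real.rpow_le_rpow (by positivity) ?_ hγ.le
          have htk : t * 2 ^ k ≤ max K t := by
            calc t * 2 ^ k ≤ t * max (K / t) 1 := by gcongr
              _ = max K t := by rw [mul_max_of_nonneg _ _ ht.le, mul_div_cancel₀ _ ht.ne', mul_one]
          rw [pow_succ]
          linarith [max_le_max_left K ht1, htk]
  calc t ^ γ * dist (f x) (f b) ≤ t ^ γ * ((η 1 + 1) * Θ ^ (k + 1) * dist (f x) (f a)) := by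
        gcongr
        exact hf.dist_le_mul_pow_of_dist_le_two_pow_mul hX hD (k + 1) hxa hb
    _ = (η 1 + 1) * (t ^ γ * Θ ^ (k + 1)) * dist (f x) (f a) := by ring
    _ ≤ (η 1 + 1) * (2 * max K 1) ^ γ * dist (f x) (f a) := by gcongr

end IsQuasisymmetric

end Quasisymmetric

namespace RegularStructure

variable {X Y : Type*} [MetricSpace X] [MeasurableSpace X] [MetricSpace Y] {α : ℕ → ℝ}
  (S : RegularStructure X α) {n i j : ℕ}

theorem ctr_mem_Q (hi : i ∈ S.idx n) : S.ctr n i ∈ S.Q n i :=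
  S.ball_subset n i hi (mem_ball_self (S.rad_pos n i hi))

theorem eq_of_mem_Q (hi : i ∈ S.idx n) (hj : j ∈ S.idx n) {x : X} (hxi : x ∈ S.Q n i)
    (hxj : x ∈ S.Q n j) : i = j := by
  by_contra hij
  exact (S.pairwise_disj n i hi j hj hij ▸ mem_inter hxi hxj : x ∈ (∅ : Set X))

theorem rad_le_dist_of_notMem (hi : i ∈ S.idx n) {p : X} (hp : p ∉ S.Q n i) :
    S.rad n i ≤ dist (S.ctr n i) p :=
  not_lt.1 fun h => hp (S.ball_subset n i hi (mem_ball'.2 h))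

theorem exists_notMem_Q_succ (hi : i ∈ S.idx (n + 1)) : ∃ p, p ∉ S.Q (n + 1) i := by
  obtain ⟨k, hk, -⟩ := S.cover n (S.ctr (n + 1) i)
  by_contra! h
  obtain ⟨q, -, hq⟩ := S.center_proper n k hk i hi (h _)
  exact hq (h q)

theorem exists_half_child_rad_le_dist (hi : i ∈ S.idx n) :
    ∃ p, 1 / S.C₂ * α n ^ (1 / S.d) * S.rad n i / 2 ≤ dist (S.ctr n i) p := by
  obtain ⟨j, hj, hcj⟩ := S.cover (n + 1) (S.ctr n i)
  obtain ⟨q, -, hq⟩ := S.center_proper n i hi j hj hcj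
  have hchild := S.center_lower n i hi j hj hcj
  have hq' := S.rad_le_dist_of_notMem hj hq
  have htri := dist_triangle_left (S.ctr (n + 1) j) q (S.ctr n i)
  by_cases h : dist (S.ctr n i) (S.ctr (n + 1) j) ≤ dist (S.ctr n i) q
  · exact ⟨q, by linarith⟩
  · exact ⟨S.ctr (n + 1) j, by linarith⟩

theorem exists_mul_rad_le_dist (hα0 : 0 < α 0) :
    ∃ κ, 0 < κ ∧ κ ≤ 1 ∧ ∀ n, ∀ i ∈ S.idx n, ∃ p, κ * S.rad n i ≤ dist (S.ctr n i) p := by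
  have hC₂ := S.one_le_C₂
  refine ⟨min 1 (1 / S.C₂ * α 0 ^ (1 / S.d) / 2), lt_min one_pos (by positivity),
    min_le_left _ _, ?_⟩
  rintro (_ | n) i hi
  · obtain ⟨p, hp⟩ := S.exists_half_child_rad_le_dist hi
    refine ⟨p, le_trans ?_ hp⟩
    calc min 1 (1 / S.C₂ * α 0 ^ (1 / S.d) / 2) * S.rad 0 i
        ≤ 1 / S.C₂ * α 0 ^ (1 / S.d) / 2 * S.rad 0 i :=
          mul_le_mul_of_nonneg_right (min_le_right _ _) (S.rad_pos 0 i hi).le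
      _ = 1 / S.C₂ * α 0 ^ (1 / S.d) * S.rad 0 i / 2 := by ring
  · obtain ⟨p, hp⟩ := S.exists_notMem_Q_succ hi
    exact ⟨p, (mul_le_of_le_one_left (S.rad_pos _ i hi).le (min_le_left _ _)).trans
      (S.rad_le_dist_of_notMem hi hp)⟩

def IsScalePoints (c : ℝ) (pt : ℕ → ℕ → X) : Prop :=
  ∀ n, ∀ i ∈ S.idx n,
    c * S.rad n i ≤ dist (S.ctr n i) (pt n i) ∧ dist (S.ctr n i) (pt n i) < S.rad n i

theorem exists_isScalePoints {D : ℝ} (hX : UniformlyPerfectWith X D) {κ : ℝ} (hκ0 : 0 < κ)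
    (hκ1 : κ ≤ 1) (hfar : ∀ n, ∀ i ∈ S.idx n, ∃ p, κ * S.rad n i ≤ dist (S.ctr n i) p) :
    ∃ pt, S.IsScalePoints (κ / D) pt := by
  have : ∀ n i, ∃ p, i ∈ S.idx n → κ / D * S.rad n i ≤ dist (S.ctr n i) p ∧
      dist (S.ctr n i) p < S.rad n i := by
    intro n i
    by_cases hi : i ∈ S.idx n
    · obtain ⟨p, hp⟩ := hfar n i hi
      have hr := S.rad_pos n i hi
      obtain ⟨z, hz, hz'⟩ := hX.exists_dist_mem_Ico (mul_pos hκ0 hr) hp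
      exact ⟨z, fun _ => ⟨by rwa [div_mul_eq_mul_div],
        hz'.trans_le (mul_le_of_le_one_left hr.le hκ1)⟩⟩
    · exact ⟨S.ctr n i, fun h => absurd h hi⟩
  choose pt hpt using this
  exact ⟨pt, fun n i hi => hpt n i hi⟩

/-- Dividing by `η 1 + 1` is what makes the ball of this radius about `f (ctr n i)` fit inside
`f '' Q n i`. -/
noncomputable def imageRad (f : X → Y) (η : ℝ → ℝ) (pt : ℕ → ℕ → X) (n i : ℕ) : ℝ :=
  dist (f (S.ctr n i)) (f (pt n i)) / (η 1 + 1)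

variable {f : X → Y} {η : ℝ → ℝ} {c D : ℝ} {pt : ℕ → ℕ → X}

theorem ctr_ne_of_isScalePoints (hc : 0 < c) (hpt : S.IsScalePoints c pt) (hi : i ∈ S.idx n) :
    S.ctr n i ≠ pt n i :=
  dist_pos.1 ((mul_pos hc (S.rad_pos n i hi)).trans_le (hpt n i hi).1)

theorem mul_imageRad (hf : IsQuasisymmetric f η) :
    (η 1 + 1) * S.imageRad f η pt n i = dist (f (S.ctr n i)) (f (pt n i)) :=
  mul_div_cancel₀ _ (by linarith [hf.eta_nonneg zero_le_one])

theorem imageRad_pos (hf : IsQuasisymmetric f η) (hc : 0 < c) (hpt : S.IsScalePoints c pt)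
    (hi : i ∈ S.idx n) : 0 < S.imageRad f η pt n i :=
  div_pos (dist_pos.2 (hf.injective.ne (S.ctr_ne_of_isScalePoints hc hpt hi)))
    (by linarith [hf.eta_nonneg zero_le_one])

theorem imageRad_le_dist (hf : IsQuasisymmetric f η) (hpt : S.IsScalePoints c pt)
    (hi : i ∈ S.idx n) {u : X} (hu : S.rad n i ≤ dist (S.ctr n i) u) :
    S.imageRad f η pt n i ≤ dist (f (S.ctr n i)) (f u) := by
  have hxu : S.ctr n i ≠ u := dist_pos.1 ((S.rad_pos n i hi).trans_le hu)
  rw [← mul_le_mul_iff_right₀ (by linarith [hf.eta_nonneg zero_le_one] : 0 < η 1 + 1),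
    S.mul_imageRad hf]
  exact hf.dist_le_of_dist_le hxu (by rw [one_mul]; exact (hpt n i hi).2.le.trans hu)

theorem dist_le_imageRad (hf : IsQuasisymmetric f η) (hc : 0 < c) (hpt : S.IsScalePoints c pt)
    (hi : i ∈ S.idx n) {u : X} {s : ℝ} (hu : dist (S.ctr n i) u ≤ s * S.rad n i) :
    dist (f (S.ctr n i)) (f u) ≤ (η (s / c) + 1) * (η 1 + 1) * S.imageRad f η pt n i := by
  have hs : 0 ≤ s := nonneg_of_mul_nonneg_left (dist_nonneg.trans hu) (S.rad_pos n i hi)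
  rw [mul_assoc, S.mul_imageRad hf]
  refine hf.dist_le_of_dist_le (S.ctr_ne_of_isScalePoints hc hpt hi) (hu.trans ?_)
  rw [div_mul_eq_mul_div, le_div_iff₀ hc, mul_assoc]
  exact mul_le_mul_of_nonneg_left (by linarith [(hpt n i hi).1]) hs

theorem dist_lt_rad_div_of_dist_lt (hf : IsQuasisymmetric f η) (hc : 0 < c)
    (hpt : S.IsScalePoints c pt) (hi : i ∈ S.idx n) {s T : ℝ} (hs0 : 0 < s) (hs1 : s ≤ 1)
    (hηs : η s * T ≤ 1) {u : X} (hu : dist (f (S.ctr n i)) (f u) < T * S.imageRad f η pt n i) :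
    dist (S.ctr n i) u < S.rad n i / s := by
  by_contra! hfar
  have hr := S.rad_pos n i hi
  have hρ := S.imageRad_pos hf hc hpt hi
  have hrs : S.rad n i ≤ S.rad n i / s := le_div_self hr.le hs0 hs1
  have hxu : S.ctr n i ≠ u := dist_pos.1 ((div_pos hr hs0).trans_le hfar)
  have hptu : pt n i ≠ u := by
    rintro rfl
    exact ((hpt n i hi).2.trans_le hrs).not_ge hfar
  have hfpt := hf.dist_le_eta_mul (S.ctr_ne_of_isScalePoints hc hpt hi) hxu hptu
    (s := s) (by linarith [(hpt n i hi).2, (div_le_iff₀' hs0).1 hfar])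
  rw [← S.mul_imageRad hf] at hfpt
  have := mul_lt_mul_of_pos_left hu (hf.eta_pos hs0)
  nlinarith [hf.eta_nonneg zero_le_one]

theorem imageRad_le_of_ne (hf : IsQuasisymmetric f η) (hc : 0 < c) (hpt : S.IsScalePoints c pt)
    (hi : i ∈ S.idx n) (hj : j ∈ S.idx n) (hij : i ≠ j) {G : ℝ}
    (hG : dist (S.ctr n j) (S.ctr n i) ≤ G * S.rad n j) :
    S.imageRad f η pt n i ≤ (η (G / c) + 1) * (η 1 + 1) * S.imageRad f η pt n j := by
  have hji : S.ctr n j ∉ S.Q n i := fun h => hij (S.eq_of_mem_Q hi hj h (S.ctr_mem_Q hj))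
  calc S.imageRad f η pt n i ≤ dist (f (S.ctr n i)) (f (S.ctr n j)) :=
        S.imageRad_le_dist hf hpt hi (S.rad_le_dist_of_notMem hi hji)
    _ ≤ (η (G / c) + 1) * (η 1 + 1) * S.imageRad f η pt n j := by
        rw [dist_comm]
        exact S.dist_le_imageRad hf hc hpt hj hG

theorem dist_le_imageRad_of_mem_Q (hf : IsQuasisymmetric f η) (hc : 0 < c)
    (hpt : S.IsScalePoints c pt) (hj : j ∈ S.idx n) {x u : X} (hx : x ∈ S.Q n j)
    (hu : dist x u ≤ S.rad n j) :
    dist (f x) (f u) ≤ 2 * ((η ((S.C₁ + 1) / c) + 1) * (η 1 + 1)) * S.imageRad f η pt n j := by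
  have hx' : dist (S.ctr n j) x < S.C₁ * S.rad n j := mem_ball'.1 (S.subset_ball n j hj hx)
  have hr := S.rad_pos n j hj
  calc dist (f x) (f u) ≤ dist (f (S.ctr n j)) (f x) + dist (f (S.ctr n j)) (f u) :=
        dist_triangle_left _ _ _
    _ ≤ (η ((S.C₁ + 1) / c) + 1) * (η 1 + 1) * S.imageRad f η pt n j +
          (η ((S.C₁ + 1) / c) + 1) * (η 1 + 1) * S.imageRad f η pt n j :=
        add_le_add (S.dist_le_imageRad hf hc hpt hj (by linarith))
          (S.dist_le_imageRad hf hc hpt hj (by linarith [dist_triangle (S.ctr n j) x u]))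
    _ = _ := by ring

theorem exists_imageRad_succ_le (hf : IsQuasisymmetric f η) (hX : UniformlyPerfectWith X D)
    (hD : 1 ≤ D) (hα : ∀ n, 0 < α n ∧ α n < 1) (hc : 0 < c) (hpt : S.IsScalePoints c pt) :
    ∃ β : ℝ, 0 < β ∧ ∃ C, ∀ n, ∀ i ∈ S.idx n, ∀ j ∈ S.idx (n + 1), S.ctr n i ∈ S.Q (n + 1) j →
      S.imageRad f η pt (n + 1) j ≤ C * α n ^ (S.d * β) * S.imageRad f η pt n i := by
  obtain ⟨β, hβ, hdecay⟩ := hf.exists_rpow_decay hX hD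
  have hC₁ := S.one_le_C₁
  have hC₂ := S.one_le_C₂
  obtain ⟨C, hC⟩ := hdecay ((S.C₁ + 1) * S.C₂ / c) (by positivity)
  refine ⟨β, hβ, 2 * C, fun n i hi j hj hcj => ?_⟩
  have hαd : 0 < α n ^ S.d := Real.rpow_pos_of_pos (hα n).1 _
  have hnear : ∀ u, dist (S.ctr n i) u ≤ (S.C₁ + 1) * S.rad (n + 1) j →
      dist (f (S.ctr n i)) (f u) ≤
        C * α n ^ (S.d * β) * ((η 1 + 1) * S.imageRad f η pt n i) := by
    intro u hu
    rw [Real.rpow_mul (hα n).1.le, S.mul_imageRad hf]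
    refine hC _ u _ _ (S.ctr_ne_of_isScalePoints hc hpt hi) hαd
      (Real.rpow_le_one (hα n).1.le (hα n).2.le S.d_pos.le) ?_
    calc dist (S.ctr n i) u ≤ (S.C₁ + 1) * (S.C₂ * α n ^ S.d * S.rad n i) :=
          hu.trans (by gcongr; exact S.center_upper n i hi j hj hcj)
      _ = (S.C₁ + 1) * S.C₂ / c * α n ^ S.d * (c * S.rad n i) := by field_simp
      _ ≤ (S.C₁ + 1) * S.C₂ / c * α n ^ S.d * dist (S.ctr n i) (pt n i) := by
          gcongr
          exact (hpt n i hi).1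
  have hctr : dist (S.ctr n i) (S.ctr (n + 1) j) < S.C₁ * S.rad (n + 1) j :=
    mem_ball.1 (S.subset_ball (n + 1) j hj hcj)
  have hr' := S.rad_pos (n + 1) j hj
  have hη1 : 0 < η 1 + 1 := by linarith [hf.eta_nonneg zero_le_one]
  rw [← mul_le_mul_iff_right₀ hη1, S.mul_imageRad hf]
  calc dist (f (S.ctr (n + 1) j)) (f (pt (n + 1) j))
      ≤ dist (f (S.ctr n i)) (f (S.ctr (n + 1) j)) + dist (f (S.ctr n i)) (f (pt (n + 1) j)) :=
        dist_triangle_left _ _ _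
    _ ≤ 2 * (C * α n ^ (S.d * β) * ((η 1 + 1) * S.imageRad f η pt n i)) := by
        rw [two_mul]
        gcongr <;> refine hnear _ ?_
        · linarith
        · linarith [dist_triangle (S.ctr n i) (S.ctr (n + 1) j) (pt (n + 1) j),
            (hpt (n + 1) j hj).2]
    _ = (η 1 + 1) * (2 * C * α n ^ (S.d * β) * S.imageRad f η pt n i) := by ring

theorem exists_dist_mem_of_ctr_mem_Q_succ (hX : UniformlyPerfectWith X D) (hD : 0 < D)
    (hα : ∀ n, 0 < α n ∧ α n < 1) {κ : ℝ} (hκ0 : 0 < κ) (hκ1 : κ ≤ 1)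
    (hfar : ∀ n, ∀ i ∈ S.idx n, ∃ p, κ * S.rad n i ≤ dist (S.ctr n i) p)
    (hi : i ∈ S.idx n) (hj : j ∈ S.idx (n + 1)) (hcj : S.ctr n i ∈ S.Q (n + 1) j) :
    ∃ z, κ * α n ^ (1 / S.d) * S.rad n i / S.C₂ / D ≤ dist (S.ctr n i) z ∧
      dist (S.ctr n i) z ≤ S.rad (n + 1) j := by
  have hC₂ := S.one_le_C₂
  have hr := S.rad_pos n i hi
  have ht0 : 0 < α n ^ (1 / S.d) := Real.rpow_pos_of_pos (hα n).1 _
  have ht1 : α n ^ (1 / S.d) ≤ 1 :=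
    Real.rpow_le_one (hα n).1.le (hα n).2.le (by have := S.d_pos; positivity)
  obtain ⟨p, hp⟩ := hfar n i hi
  obtain ⟨z, hz, hzR⟩ := hX.exists_dist_mem_Ico (lt_min (S.rad_pos (n + 1) j hj) (mul_pos hκ0 hr))
    ((min_le_right _ _).trans hp)
  refine ⟨z, le_trans (div_le_div_of_nonneg_right (le_min ?_ ?_) hD.le) hz,
    hzR.le.trans (min_le_left _ _)⟩
  · calc κ * α n ^ (1 / S.d) * S.rad n i / S.C₂ ≤ 1 * α n ^ (1 / S.d) * S.rad n i / S.C₂ := by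
          gcongr
      _ = 1 / S.C₂ * α n ^ (1 / S.d) * S.rad n i := by ring
      _ ≤ S.rad (n + 1) j := S.center_lower n i hi j hj hcj
  · rw [mul_right_comm, div_le_iff₀ (by positivity)]
    gcongr
    nlinarith

theorem exists_imageRad_le_succ (hf : IsQuasisymmetric f η) (hX : UniformlyPerfectWith X D)
    (hD : 1 ≤ D) (hα : ∀ n, 0 < α n ∧ α n < 1) (hc : 0 < c) (hpt : S.IsScalePoints c pt)
    {κ : ℝ} (hκ0 : 0 < κ) (hκ1 : κ ≤ 1)
    (hfar : ∀ n, ∀ i ∈ S.idx n, ∃ p, κ * S.rad n i ≤ dist (S.ctr n i) p) :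
    ∃ γ : ℝ, 0 < γ ∧ ∃ C, ∀ n, ∀ i ∈ S.idx n, ∀ j ∈ S.idx (n + 1), S.ctr n i ∈ S.Q (n + 1) j →
      α n ^ (γ / S.d) * S.imageRad f η pt n i ≤ C * S.imageRad f η pt (n + 1) j := by
  obtain ⟨γ, hγ, hgrowth⟩ := hf.exists_rpow_growth hX (by linarith)
  have hC₂ := S.one_le_C₂
  obtain ⟨C, hC0, hC⟩ := hgrowth (S.C₂ * D / κ)
  set A := (η ((S.C₁ + 1) / c) + 1) * (η 1 + 1)
  have hη1 : 0 < η 1 + 1 := by linarith [hf.eta_nonneg zero_le_one]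
  refine ⟨γ, hγ, C * (2 * A) / (η 1 + 1), fun n i hi j hj hcj => ?_⟩
  set t := α n ^ (1 / S.d)
  have ht0 : 0 < t := Real.rpow_pos_of_pos (hα n).1 _
  have ht1 : t ≤ 1 := Real.rpow_le_one (hα n).1.le (hα n).2.le (by have := S.d_pos; positivity)
  have hr := S.rad_pos n i hi
  obtain ⟨z, hz, hzr⟩ :=
    S.exists_dist_mem_of_ctr_mem_Q_succ hX (by linarith) hα hκ0 hκ1 hfar hi hj hcj
  have hxz : S.ctr n i ≠ z :=
    dist_pos.1 ((by positivity : 0 < κ * t * S.rad n i / S.C₂ / D).trans_le hz)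
  have hgrow : t ^ γ * dist (f (S.ctr n i)) (f (pt n i)) ≤ C * dist (f (S.ctr n i)) (f z) := by
    refine hC _ z _ t hxz ht0 ht1 ?_
    calc t * dist (S.ctr n i) (pt n i) ≤ t * S.rad n i := by gcongr; exact (hpt n i hi).2.le
      _ = S.C₂ * D / κ * (κ * t * S.rad n i / S.C₂ / D) := by field_simp
      _ ≤ S.C₂ * D / κ * dist (S.ctr n i) z := by
          exact mul_le_mul_of_nonneg_left hz (by positivity)
  have hfz : dist (f (S.ctr n i)) (f z) ≤ 2 * A * S.imageRad f η pt (n + 1) j :=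
    S.dist_le_imageRad_of_mem_Q hf hc hpt hj hcj hzr
  rw [div_eq_mul_one_div γ, mul_comm γ, Real.rpow_mul (hα n).1.le, ← mul_le_mul_iff_right₀ hη1]
  calc (η 1 + 1) * (t ^ γ * S.imageRad f η pt n i)
      = t ^ γ * dist (f (S.ctr n i)) (f (pt n i)) := by rw [← S.mul_imageRad hf]; ring
    _ ≤ C * (2 * A * S.imageRad f η pt (n + 1) j) := hgrow.trans (by gcongr)
    _ = (η 1 + 1) * (C * (2 * A) / (η 1 + 1) * S.imageRad f η pt (n + 1) j) := by
        field_simp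

theorem exists_imageRad_center_bounds (hf : IsQuasisymmetric f η) (hX : UniformlyPerfectWith X D)
    (hD : 1 ≤ D) (hα : ∀ n, 0 < α n ∧ α n < 1) (hc : 0 < c) (hpt : S.IsScalePoints c pt)
    {κ : ℝ} (hκ0 : 0 < κ) (hκ1 : κ ≤ 1)
    (hfar : ∀ n, ∀ i ∈ S.idx n, ∃ p, κ * S.rad n i ≤ dist (S.ctr n i) p) :
    ∃ d C : ℝ, 0 < d ∧ d ≤ 1 ∧ 1 ≤ C ∧
      (∀ n, ∀ i ∈ S.idx n, ∀ j ∈ S.idx (n + 1), S.ctr n i ∈ S.Q (n + 1) j →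
        1 / C * α n ^ (1 / d) * S.imageRad f η pt n i ≤ S.imageRad f η pt (n + 1) j) ∧
      (∀ n, ∀ i ∈ S.idx n, ∀ j ∈ S.idx (n + 1), S.ctr n i ∈ S.Q (n + 1) j →
        S.imageRad f η pt (n + 1) j ≤ C * α n ^ d * S.imageRad f η pt n i) := by
  obtain ⟨β, hβ, Cu, hCu⟩ := S.exists_imageRad_succ_le hf hX hD hα hc hpt
  obtain ⟨γ, hγ, Cl, hCl⟩ := S.exists_imageRad_le_succ hf hX hD hα hc hpt hκ0 hκ1 hfar
  have hd := S.d_pos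
  set d := min 1 (min (S.d * β) (S.d / γ))
  have hd0 : 0 < d := lt_min one_pos (lt_min (by positivity) (by positivity))
  set C := max 1 (max Cu Cl)
  have hC : 1 ≤ C := le_max_left _ _
  refine ⟨d, C, hd0, min_le_left _ _, hC, fun n i hi j hj hcj => ?_,
    fun n i hi j hj hcj => ?_⟩
  · have hρ := S.imageRad_pos hf hc hpt hi
    have hρ' := S.imageRad_pos hf hc hpt hj
    have hexp : γ / S.d ≤ 1 / d := by
      rw [← one_div_div]
      exact one_div_le_one_div_of_le hd0 ((min_le_right _ _).trans (min_le_right _ _))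
    rw [mul_assoc, one_div_mul_eq_div, div_le_iff₀ (by positivity)]
    calc α n ^ (1 / d) * S.imageRad f η pt n i
        ≤ α n ^ (γ / S.d) * S.imageRad f η pt n i :=
          mul_le_mul_of_nonneg_right
            (Real.rpow_le_rpow_of_exponent_ge (hα n).1 (hα n).2.le hexp) hρ.le
      _ ≤ Cl * S.imageRad f η pt (n + 1) j := hCl n i hi j hj hcj
      _ ≤ S.imageRad f η pt (n + 1) j * C := by
          rw [mul_comm]
          gcongr
          exact (le_max_right _ _).trans (le_max_right _ _)
  · have hρ := S.imageRad_pos hf hc hpt hi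
    calc S.imageRad f η pt (n + 1) j ≤ Cu * α n ^ (S.d * β) * S.imageRad f η pt n i :=
          hCu n i hi j hj hcj
      _ ≤ C * α n ^ d * S.imageRad f η pt n i := by
          refine mul_le_mul_of_nonneg_right (mul_le_mul ((le_max_left _ _).trans (le_max_right _ _))
            ?_ (Real.rpow_nonneg (hα n).1.le _) (by linarith)) hρ.le
          exact Real.rpow_le_rpow_of_exponent_ge (hα n).1 (hα n).2.le
            ((min_le_right _ _).trans (min_le_left _ _))

theorem dist_ctr_le_of_mem_Q (hi : i ∈ S.idx n) (hj : j ∈ S.idx n) {u : X}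
    (hu : u ∈ S.Q n i) {s : ℝ} (hs : 0 < s) (huj : dist (S.ctr n j) u < S.rad n j / s) :
    dist (S.ctr n i) (S.ctr n j) ≤ (S.C₁ + 1 / s) * S.C₃ (1 / s + 1) * S.rad n i ∧
      dist (S.ctr n j) (S.ctr n i) ≤ (S.C₁ + 1 / s) * S.C₃ (1 / s + 1) * S.rad n j := by
  have hT : 1 < 1 / s + 1 := by linarith [one_div_pos.2 hs]
  have hK := S.one_le_C₃ _ hT
  have hC₁ := S.one_le_C₁
  have hri := S.rad_pos n i hi
  have hrj := S.rad_pos n j hj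
  obtain ⟨hji, hij⟩ := S.comparable _ hT n i hi j hj ⟨u, hu, mem_ball'.2 (huj.trans_le (by
    rw [div_eq_mul_one_div, mul_comm]
    exact mul_le_mul_of_nonneg_right (by linarith) hrj.le))⟩
  rw [one_div_mul_eq_div, div_le_iff₀ (by positivity)] at hji
  have hui : dist (S.ctr n i) u < S.C₁ * S.rad n i := mem_ball'.1 (S.subset_ball n i hi hu)
  have htri := dist_triangle_right (S.ctr n i) (S.ctr n j) u
  have hs' : 0 < 1 / s := one_div_pos.2 hs
  have hdiv : S.rad n j / s = 1 / s * S.rad n j := by ring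
  rw [dist_comm (S.ctr n j)]
  constructor
  · have h1 := mul_le_mul_of_nonneg_left hji hs'.le
    have h2 : S.C₁ * S.rad n i ≤ S.C₁ * S.rad n i * S.C₃ (1 / s + 1) :=
      le_mul_of_one_le_right (by positivity) hK
    linarith [show (S.C₁ + 1 / s) * S.C₃ (1 / s + 1) * S.rad n i =
      S.C₁ * S.rad n i * S.C₃ (1 / s + 1) + 1 / s * (S.rad n i * S.C₃ (1 / s + 1)) by ring]
  · have h1 := mul_le_mul_of_nonneg_left hij (by positivity : (0 : ℝ) ≤ S.C₁)
    have h2 : 1 / s * S.rad n j ≤ 1 / s * (S.C₃ (1 / s + 1) * S.rad n j) :=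
      mul_le_mul_of_nonneg_left (le_mul_of_one_le_left hrj.le hK) hs'.le
    linarith [show (S.C₁ + 1 / s) * S.C₃ (1 / s + 1) * S.rad n j =
      S.C₁ * (S.C₃ (1 / s + 1) * S.rad n j) + 1 / s * (S.C₃ (1 / s + 1) * S.rad n j) by ring]

theorem exists_imageRad_comparable (hf : IsQuasisymmetric f η) (hc : 0 < c)
    (hpt : S.IsScalePoints c pt) {T : ℝ} (hT : 1 < T) :
    ∃ C, 1 ≤ C ∧ ∀ n, ∀ i ∈ S.idx n, ∀ j ∈ S.idx n,
      (f '' S.Q n i ∩ ball (f (S.ctr n j)) (T * S.imageRad f η pt n j)).Nonempty →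
      1 / C * S.imageRad f η pt n j ≤ S.imageRad f η pt n i ∧
        S.imageRad f η pt n i ≤ C * S.imageRad f η pt n j := by
  obtain ⟨s, hs0, hs⟩ := hf.exists_pos_eta_le (by positivity : 0 < 1 / T)
  have hs'0 : 0 < min s 1 := lt_min hs0 one_pos
  have hηs : η (min s 1) * T ≤ 1 := by
    rw [← le_div_iff₀ (by positivity)]
    exact (hf.eta_mono hs'0.le (min_le_left _ _)).trans hs
  set G := (S.C₁ + 1 / min s 1) * S.C₃ (1 / min s 1 + 1)
  have hG : 0 ≤ G := by
    have := S.one_le_C₁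
    have := S.one_le_C₃ (1 / min s 1 + 1) (by linarith [one_div_pos.2 hs'0])
    positivity
  have hη1 := hf.eta_nonneg zero_le_one
  have hC : 1 ≤ (η (G / c) + 1) * (η 1 + 1) :=
    one_le_mul_of_one_le_of_one_le (by linarith [hf.eta_nonneg (by positivity : 0 ≤ G / c)])
      (by linarith)
  refine ⟨_, hC, ?_⟩
  rintro n i hi j hj ⟨_, ⟨u, hu, rfl⟩, huj⟩
  have hρi := S.imageRad_pos hf hc hpt hi
  rw [one_div_mul_eq_div, div_le_iff₀ (by positivity)]
  rcases eq_or_ne i j with rfl | hij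
  · exact ⟨le_mul_of_one_le_right hρi.le hC, le_mul_of_one_le_left hρi.le hC⟩
  have hnear := S.dist_lt_rad_div_of_dist_lt hf hc hpt hj hs'0 (min_le_right _ _) hηs
    (mem_ball'.1 huj)
  obtain ⟨hdi, hdj⟩ := S.dist_ctr_le_of_mem_Q hi hj hu hs'0 hnear
  exact ⟨by rw [mul_comm]; exact S.imageRad_le_of_ne hf hc hpt hj hi hij.symm hdi,
    S.imageRad_le_of_ne hf hc hpt hi hj hij hdj⟩

theorem ball_imageRad_subset (f : X ≃ₜ Y) (hf : IsQuasisymmetric f η)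
    (hpt : S.IsScalePoints c pt) :
    ∀ n, ∀ i ∈ S.idx n, ball (f (S.ctr n i)) (S.imageRad f η pt n i) ⊆ f '' S.Q n i := by
  intro n i hi y hy
  obtain ⟨u, rfl⟩ := f.surjective y
  refine mem_image_of_mem f (not_not.1 fun hu => ?_)
  exact (S.imageRad_le_dist hf hpt hi (S.rad_le_dist_of_notMem hi hu)).not_gt (mem_ball'.1 hy)

theorem image_subset_ball_imageRad (hf : IsQuasisymmetric f η) (hc : 0 < c)
    (hpt : S.IsScalePoints c pt) :
    ∀ n, ∀ i ∈ S.idx n, f '' S.Q n i ⊆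
      ball (f (S.ctr n i)) (((η (S.C₁ / c) + 1) * (η 1 + 1) + 1) * S.imageRad f η pt n i) := by
  rintro n i hi _ ⟨u, hu, rfl⟩
  have hρ := S.imageRad_pos hf hc hpt hi
  rw [mem_ball']
  calc dist (f (S.ctr n i)) (f u) ≤ (η (S.C₁ / c) + 1) * (η 1 + 1) * S.imageRad f η pt n i :=
        S.dist_le_imageRad hf hc hpt hi (mem_ball'.1 (S.subset_ball n i hi hu)).le
    _ < ((η (S.C₁ / c) + 1) * (η 1 + 1) + 1) * S.imageRad f η pt n i := by linarith

theorem limitSet_eq_image [MeasurableSpace Y] {S' : RegularStructure Y α} (f : X ≃ₜ Y)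
    (hidx : S'.idx = S.idx) (hQ : ∀ n i, S'.Q n i = f '' S.Q n i)
    (hctr : ∀ n i, S'.ctr n i = f (S.ctr n i)) :
    S'.limitSet = f '' S.limitSet := by
  have hlevel : ∀ n, S'.level n = f '' S.level n := by
    intro n
    ext y
    obtain ⟨x, rfl⟩ := f.surjective y
    simp only [level, hidx, hQ, hctr, mem_ofPred_eq, ← image_sdiff f.injective,
      f.injective.mem_set_image]
  simp only [limitSet, hlevel, image_iInter f.bijective]

theorem exists_image_of_isQuasisymmetric [BorelSpace X] [MeasurableSpace Y] [BorelSpace Y]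
    (hα : ∀ n, 0 < α n ∧ α n < 1) (hX : UniformlyPerfectWith X D) (hD : 1 ≤ D) (f : X ≃ₜ Y)
    (hf : IsQuasisymmetric f η) :
    ∃ S' : RegularStructure Y α, S'.limitSet = f '' S.limitSet := by
  obtain ⟨κ, hκ0, hκ1, hfar⟩ := S.exists_mul_rad_le_dist (hα 0).1
  obtain ⟨pt, hpt⟩ := S.exists_isScalePoints hX hκ0 hκ1 hfar
  have hc : 0 < κ / D := by positivity
  obtain ⟨d, C₂, hd0, hd1, hC₂, hlower, hupper⟩ :=
    S.exists_imageRad_center_bounds hf hX hD hα hc hpt hκ0 hκ1 hfar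
  choose! C₃ hC₃ hcomp using fun T (hT : 1 < T) => S.exists_imageRad_comparable hf hc hpt hT
  have hη1 := hf.eta_nonneg zero_le_one
  have hηC₁ := hf.eta_nonneg (by have := S.one_le_C₁; positivity : 0 ≤ S.C₁ / (κ / D))
  have mem_image_iff : ∀ {s : Set X} {x : X}, f x ∈ f '' s ↔ x ∈ s := f.injective.mem_set_image
  refine ⟨{ idx := S.idx
            Q := fun n i => f '' S.Q n i
            ctr := fun n i => f (S.ctr n i)
            rad := S.imageRad f η pt
            d := d
            C₁ := (η (S.C₁ / (κ / D)) + 1) * (η 1 + 1) + 1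
            C₂ := C₂
            C₃ := C₃
            d_pos := hd0
            d_le_one := hd1
            one_le_C₁ := by nlinarith
            one_le_C₂ := hC₂
            borel := fun n i hi => f.measurableEmbedding.measurableSet_image.2 (S.borel n i hi)
            rad_pos := fun n i hi => S.imageRad_pos hf hc hpt hi
            cover := fun n y => by
              obtain ⟨i, hi, hQ⟩ := S.cover n (f.symm y)
              exact ⟨i, hi, f.apply_symm_apply y ▸ mem_image_of_mem f hQ⟩
            pairwise_disj := fun n i hi j hj hij => by
              rw [← image_inter f.injective, S.pairwise_disj n i hi j hj hij, image_empty]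
            nested := fun k m hmk i hi j hj => by
              rw [← image_inter f.injective, image_eq_empty, image_subset_image_iff f.injective]
              exact S.nested k m hmk i hi j hj
            ball_subset := S.ball_imageRad_subset f hf hpt
            subset_ball := S.image_subset_ball_imageRad hf hc hpt
            center_lower := fun n i hi j hj hcj => hlower n i hi j hj (mem_image_iff.1 hcj)
            center_upper := fun n i hi j hj hcj => hupper n i hi j hj (mem_image_iff.1 hcj)
            center_proper := fun n i hi j hj hcj => by
              rw [← image_sdiff f.injective, image_nonempty]
              exact S.center_proper n i hi j hj (mem_image_iff.1 hcj)
            one_le_C₃ := hC₃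
            comparable := hcomp },
    S.limitSet_eq_image f rfl (fun _ _ => rfl) (fun _ _ => rfl)⟩

end RegularStructure

theorem regular_set_quasisymmetric_invariant_general {X Y : Type*}
    [MetricSpace X] [MeasurableSpace X] [BorelSpace X]
    [MetricSpace Y] [MeasurableSpace Y] [BorelSpace Y]
    (hup : UniformlyPerfect X)
    (α : ℕ → ℝ) (hα : ∀ n, 0 < α n ∧ α n < 1)
    (E : Set X) (hE : IsRegularSet α E)
    (f : X ≃ₜ Y) (η : ℝ → ℝ)
    (hη_mono : StrictMonoOn η (Set.Ici 0))
    (hη_maps : Set.MapsTo η (Set.Ici 0) (Set.Ici 0))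
    (hη_surj : Set.SurjOn η (Set.Ici 0) (Set.Ici 0))
    (hqs : ∀ x y z : X, x ≠ y → x ≠ z → y ≠ z →
      dist (f x) (f y) / dist (f x) (f z) ≤ η (dist x y / dist x z)) :
    IsRegularSet α (f '' E) := by
  obtain ⟨S, rfl⟩ := hE
  obtain ⟨-, D, hD, hX⟩ := hup
  obtain ⟨S', hS'⟩ := S.exists_image_of_isQuasisymmetric hα hX hD f
    ⟨f.injective, hη_mono, hη_maps, hη_surj, hqs⟩
  exact ⟨S', hS'.symm⟩

/-- quasisymmetric invariance of `(α n)`-regularity. -/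
theorem regular_set_quasisymmetric_invariant {X Y : Type*}
    [MetricSpace X] [MeasurableSpace X] [BorelSpace X]
    [MetricSpace Y] [MeasurableSpace Y] [BorelSpace Y]
    (hup : UniformlyPerfect X)
    (α : ℕ → ℝ) (hα : ∀ n, 0 < α n ∧ α n < 1)
    (E : Set X) (hE : IsRegularSet α E)
    (f : X ≃ₜ Y) (η : ℝ → ℝ)
    (hη_mono : StrictMonoOn η (Set.Ici 0))
    (hη_cont : ContinuousOn η (Set.Ici 0))
    (hη_maps : Set.MapsTo η (Set.Ici 0) (Set.Ici 0))
    (hη_surj : Set.SurjOn η (Set.Ici 0) (Set.Ici 0))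
    (hqs : ∀ x y z : X, x ≠ y → x ≠ z → y ≠ z →
      dist (f x) (f y) / dist (f x) (f z) ≤ η (dist x y / dist x z)) :
    IsRegularSet α (f '' E) :=
  regular_set_quasisymmetric_invariant_general hup α hα E hE f η hη_mono hη_maps hη_surj hqs
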